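/- arXiv:1608.08433 — 2 statements merged into one kernel-verified Lean document; each statement's English description precedes it below -/
import Mathlib

section
/- Let 0 < β ≤ 1/2 and let A_1, ..., A_k (k ≥ 3) be nonempty subsets of ℕ. Assume A_1(n) = Θ(n^{β}), A_2(n) = Θ(n^{β}), and R_{A_1,...,A_k}(n) = Θ(n). Then R_{A_3,...,A_k}(n) = Θ(n^{1−2β}). -/
open Filter Asymptotics

/-- The counting function `A(n) = |{a ∈ A : a ≤ n}|`. -/
noncomputable def countFn (A : Set ℕ) (n : ℕ) : ℕ := (A ∩ Set.Iic n).ncard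

/-- `r_{A_1,…,A_k}(n) = |{(x_1,…,x_k) ∈ A_1 × ⋯ × A_k : x_1 + ⋯ + x_k = n}|`. -/
noncomputable def rk {k : ℕ} (A : Fin k → Set ℕ) (n : ℕ) : ℕ :=
  {x : Fin k → ℕ | (∀ i, x i ∈ A i) ∧ ∑ i, x i = n}.ncard

/-- `R_{A_1,…,A_k}(n) = ∑_{j ≤ n} r_{A_1,…,A_k}(j)`. -/
noncomputable def Rk {k : ℕ} (A : Fin k → Set ℕ) (n : ℕ) : ℕ :=
  ∑ j ∈ Finset.range (n + 1), rk A j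

/-!
Peeling off the first two coordinates of a tuple counted by `R_{A_1,…,A_k}(n)` gives
`R_{A_1,…,A_k}(n) ≤ A_1(n) A_2(n) R_{A_3,…,A_k}(n) ≤ R_{A_1,…,A_k}(4n)`: every coordinate of
such a tuple is at most `n`, and conversely gluing `a ≤ n` to a tuple of sum `≤ n` at most doubles
the bound. Both outer terms are `Θ(n)` and `A_1(n) A_2(n) = Θ(n^{2β})`, so dividing gives
`R_{A_3,…,A_k}(n) = Θ(n^{1-2β})`.
-/

def tuplesSumLE {k : ℕ} (A : Fin k → Set ℕ) (n : ℕ) : Set (Fin k → ℕ) :=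
  {x | (∀ i, x i ∈ A i) ∧ ∑ i, x i ≤ n}

lemma tuplesSumLE_finite {k : ℕ} (A : Fin k → Set ℕ) (n : ℕ) : (tuplesSumLE A n).Finite :=
  (Set.Finite.pi' fun _ => Set.finite_Iic n).subset fun x hx i =>
    (Finset.single_le_sum (fun j _ => Nat.zero_le (x j)) (Finset.mem_univ i)).trans hx.2

lemma Rk_eq_ncard_tuplesSumLE {k : ℕ} (A : Fin k → Set ℕ) (n : ℕ) :
    Rk A n = (tuplesSumLE A n).ncard := by
  induction n with
  | zero => simp [Rk, rk, tuplesSumLE]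
  | succ n ih =>
    have hunion : tuplesSumLE A (n + 1) =
        tuplesSumLE A n ∪ {x | (∀ i, x i ∈ A i) ∧ ∑ i, x i = n + 1} := by
      ext x
      simp only [tuplesSumLE, Set.mem_union, Set.mem_ofPred_eq, Nat.le_succ_iff, and_or_left]
    have hdisj : Disjoint (tuplesSumLE A n) {x | (∀ i, x i ∈ A i) ∧ ∑ i, x i = n + 1} :=
      Set.disjoint_left.2 fun x hx hx' => by have := hx.2; have := hx'.2; omega
    rw [Rk, Finset.sum_range_succ, ← Rk, ih, hunion, Set.ncard_union_eq hdisj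
      (tuplesSumLE_finite A n) ((tuplesSumLE_finite A (n + 1)).subset fun x hx => ⟨hx.1, hx.2.le⟩),
      rk]

lemma cons_mem_tuplesSumLE {m : ℕ} {A : Fin (m + 1) → Set ℕ} {a n : ℕ} {t : Fin m → ℕ} :
    Fin.cons a t ∈ tuplesSumLE A n ↔
      a ∈ A 0 ∧ (∀ i, t i ∈ A i.succ) ∧ a + ∑ i, t i ≤ n := by
  simp only [tuplesSumLE, Set.mem_ofPred_eq, Fin.forall_fin_succ, Fin.sum_cons, Fin.cons_zero,
    Fin.cons_succ, and_assoc]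

section
variable {m : ℕ} (A : Fin (m + 1) → Set ℕ) (n : ℕ)

lemma Rk_le_countFn_mul_Rk_succ :
    Rk A n ≤ countFn (A 0) n * Rk (fun i => A i.succ) n := by
  have hsub : Fin.consEquiv (fun _ => ℕ) ⁻¹' tuplesSumLE A n ⊆
      (A 0 ∩ Set.Iic n) ×ˢ tuplesSumLE (fun i => A i.succ) n := by
    rintro ⟨a, t⟩ h
    obtain ⟨ha, ht, hsum⟩ := cons_mem_tuplesSumLE.1 h
    exact ⟨⟨ha, by simp only [Set.mem_Iic]; omega⟩, ht, by omega⟩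
  rw [Rk_eq_ncard_tuplesSumLE, Rk_eq_ncard_tuplesSumLE, countFn, ← Set.ncard_prod,
    ← Set.ncard_preimage_of_injective_subset_range (Equiv.injective _) (by simp)]
  exact Set.ncard_le_ncard hsub
    (((Set.finite_Iic n).inter_of_right _).prod (tuplesSumLE_finite _ n))

lemma countFn_mul_Rk_succ_le_Rk :
    countFn (A 0) n * Rk (fun i => A i.succ) n ≤ Rk A (2 * n) := by
  have hsub : (A 0 ∩ Set.Iic n) ×ˢ tuplesSumLE (fun i => A i.succ) n ⊆
      Fin.consEquiv (fun _ => ℕ) ⁻¹' tuplesSumLE A (2 * n) := by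
    rintro ⟨a, t⟩ ⟨⟨ha, han⟩, ht, htn⟩
    exact cons_mem_tuplesSumLE.2 ⟨ha, ht, by simp only [Set.mem_Iic] at han; omega⟩
  rw [Rk_eq_ncard_tuplesSumLE, Rk_eq_ncard_tuplesSumLE, countFn, ← Set.ncard_prod,
    ← Set.ncard_preimage_of_injective_subset_range (s := tuplesSumLE A (2 * n))
      (Equiv.injective _) (by simp)]
  exact Set.ncard_le_ncard hsub ((tuplesSumLE_finite A _).preimage (Equiv.injective _).injOn)

end

lemma countFn_mono (A : Set ℕ) : Monotone (countFn A) := fun _ _ h =>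
  Set.ncard_le_ncard (Set.inter_subset_inter_right _ (Set.Iic_subset_Iic.2 h))
    ((Set.finite_Iic _).inter_of_right _)

section
variable {m : ℕ} (A : Fin (m + 2) → Set ℕ) (n : ℕ)

lemma Rk_le_countFn_mul_countFn_mul_Rk :
    Rk A n ≤ countFn (A 0) n * countFn (A 1) n * Rk (fun i => A i.succ.succ) n :=
  calc Rk A n ≤ countFn (A 0) n * Rk (fun i => A i.succ) n := Rk_le_countFn_mul_Rk_succ A n
    _ ≤ countFn (A 0) n * (countFn (A 1) n * Rk (fun i => A i.succ.succ) n) :=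
      Nat.mul_le_mul_left _ (Rk_le_countFn_mul_Rk_succ (fun i => A i.succ) n)
    _ = _ := (Nat.mul_assoc ..).symm

lemma countFn_mul_countFn_mul_Rk_le :
    countFn (A 0) n * countFn (A 1) n * Rk (fun i => A i.succ.succ) n ≤ Rk A (4 * n) :=
  calc countFn (A 0) n * countFn (A 1) n * Rk (fun i => A i.succ.succ) n
      = countFn (A 0) n * (countFn (A 1) n * Rk (fun i => A i.succ.succ) n) := Nat.mul_assoc ..
    _ ≤ countFn (A 0) (2 * n) * Rk (fun i => A i.succ) (2 * n) :=
      Nat.mul_le_mul (countFn_mono _ (by omega)) (countFn_mul_Rk_succ_le_Rk (fun i => A i.succ) n)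
    _ ≤ Rk A (2 * (2 * n)) := countFn_mul_Rk_succ_le_Rk A (2 * n)
    _ = Rk A (4 * n) := by rw [← Nat.mul_assoc]

end

section
variable {α : Type*} {l : Filter α}

lemma exists_bounds_iff_isTheta {f g : α → ℝ} (hf : ∀ᶠ x in l, 0 ≤ f x)
    (hg : ∀ᶠ x in l, 0 ≤ g x) :
    (∃ c₁ c₂ : ℝ, 0 < c₁ ∧ 0 < c₂ ∧ ∀ᶠ x in l, c₁ * g x ≤ f x ∧ f x ≤ c₂ * g x) ↔
      f =Θ[l] g := by
  rw [IsTheta, isBigO_iff', isBigO_iff'']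
  constructor
  · rintro ⟨c₁, c₂, hc₁, hc₂, h⟩
    refine ⟨⟨c₂, hc₂, ?_⟩, ⟨c₁, hc₁, ?_⟩⟩ <;>
      filter_upwards [h, hf, hg] with x hx hfx hgx <;>
      rw [Real.norm_of_nonneg hfx, Real.norm_of_nonneg hgx]
    exacts [hx.2, hx.1]
  · rintro ⟨⟨c₂, hc₂, hup⟩, ⟨c₁, hc₁, hlow⟩⟩
    refine ⟨c₁, c₂, hc₁, hc₂, ?_⟩
    filter_upwards [hup, hlow, hf, hg] with x hu hl hfx hgx
    rw [Real.norm_of_nonneg hfx, Real.norm_of_nonneg hgx] at hu hl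
    exact ⟨hl, hu⟩

namespace Asymptotics

lemma IsTheta.comp_tendsto {β E F : Type*} [Norm E] [Norm F] {f : α → E} {g : α → F}
    (h : f =Θ[l] g) {k : β → α} {l' : Filter β} (hk : Tendsto k l' l) : (f ∘ k) =Θ[l'] (g ∘ k) :=
  ⟨h.1.comp_tendsto hk, h.2.comp_tendsto hk⟩

lemma IsTheta.of_le_of_le {f g h u : α → ℝ} (hf : f =Θ[l] u) (hh : h =Θ[l] u)
    (hf0 : ∀ᶠ x in l, 0 ≤ f x) (hfg : ∀ᶠ x in l, f x ≤ g x) (hgh : ∀ᶠ x in l, g x ≤ h x) :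
    g =Θ[l] u := by
  refine ⟨(IsBigO.of_bound' ?_).trans hh.1, hf.2.trans (IsBigO.of_bound' ?_)⟩ <;>
    filter_upwards [hf0, hfg, hgh] with x h0 h1 h2
  exacts [abs_le_abs_of_nonneg (h0.trans h1) h2, abs_le_abs_of_nonneg h0 h1]

end Asymptotics

end

theorem stmt7 (β : ℝ)
    (k : ℕ) (hk : 3 ≤ k) (A : Fin k → Set ℕ)
    (h1 : ∃ c₁ c₂ : ℝ, 0 < c₁ ∧ 0 < c₂ ∧ ∀ᶠ n : ℕ in atTop,
      c₁ * (n : ℝ) ^ β ≤ (countFn (A ⟨0, by omega⟩) n : ℝ) ∧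
      (countFn (A ⟨0, by omega⟩) n : ℝ) ≤ c₂ * (n : ℝ) ^ β)
    (h2 : ∃ c₁ c₂ : ℝ, 0 < c₁ ∧ 0 < c₂ ∧ ∀ᶠ n : ℕ in atTop,
      c₁ * (n : ℝ) ^ β ≤ (countFn (A ⟨1, by omega⟩) n : ℝ) ∧
      (countFn (A ⟨1, by omega⟩) n : ℝ) ≤ c₂ * (n : ℝ) ^ β)
    (h3 : ∃ c₁ c₂ : ℝ, 0 < c₁ ∧ 0 < c₂ ∧ ∀ᶠ n : ℕ in atTop,
      c₁ * (n : ℝ) ≤ (Rk A n : ℝ) ∧ (Rk A n : ℝ) ≤ c₂ * (n : ℝ)) :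
    ∃ c₁ c₂ : ℝ, 0 < c₁ ∧ 0 < c₂ ∧ ∀ᶠ n : ℕ in atTop,
      c₁ * (n : ℝ) ^ (1 - 2 * β)
          ≤ (Rk (fun i : Fin (k - 2) => A (Fin.cast (by omega) (i.addNat 2))) n : ℝ) ∧
      (Rk (fun i : Fin (k - 2) => A (Fin.cast (by omega) (i.addNat 2))) n : ℝ)
          ≤ c₂ * (n : ℝ) ^ (1 - 2 * β) := by
  -- After this substitution `Fin (m + 2 - 2)`, `A ⟨0, _⟩` and `Fin.cast _ (i.addNat 2)` are
  -- definitionally `Fin m`, `A 0` and `i.succ.succ`, the forms used by the lemmas above.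
  obtain ⟨m, rfl⟩ : ∃ m, k = m + 2 := ⟨k - 2, by omega⟩
  have hcast : ∀ f : ℕ → ℕ, ∀ᶠ n in atTop, (0 : ℝ) ≤ f n :=
    fun f => .of_forall fun n => by positivity
  have hpow : ∀ γ : ℝ, ∀ᶠ n : ℕ in atTop, (0 : ℝ) ≤ (n : ℝ) ^ γ :=
    fun γ => .of_forall fun n => by positivity
  have ha := (exists_bounds_iff_isTheta (hcast _) (hpow β)).1 h1
  have hb := (exists_bounds_iff_isTheta (hcast _) (hpow β)).1 h2
  have hR := (exists_bounds_iff_isTheta (hcast _) (hcast fun n => n)).1 h3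
  have hR4 : (fun n => (Rk A (4 * n) : ℝ)) =Θ[atTop] fun n => (n : ℝ) := by
    have h4 : Tendsto (fun n : ℕ => 4 * n) atTop atTop := tendsto_id.const_mul_atTop' four_pos
    refine (hR.comp_tendsto h4).trans ?_
    simpa only [Function.comp_def, Nat.cast_mul, Nat.cast_ofNat] using
      (isTheta_const_mul_left four_ne_zero).2 (isTheta_refl _ atTop)
  have hprod : (fun n => (countFn (A 0) n : ℝ) * countFn (A 1) n * Rk (fun i => A i.succ.succ) n)
      =Θ[atTop] fun n => (n : ℝ) :=
    hR.of_le_of_le hR4 (hcast _)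
      (.of_forall fun n => by exact_mod_cast Rk_le_countFn_mul_countFn_mul_Rk A n)
      (.of_forall fun n => by exact_mod_cast countFn_mul_countFn_mul_Rk_le A n)
  have hpos : ∀ᶠ n : ℕ in atTop, (0 : ℝ) < n :=
    (eventually_gt_atTop 0).mono fun n hn => Nat.cast_pos.2 hn
  refine (exists_bounds_iff_isTheta (hcast _) (hpow _)).2 <|
    (EventuallyEq.trans_isTheta ?_ (hprod.div (ha.mul hb))).trans_eventuallyEq ?_
  · filter_upwards [(ha.mul hb).eq_zero_iff, hpos] with n hab hn
    have hn2β : (n : ℝ) ^ β * (n : ℝ) ^ β ≠ 0 := by positivity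
    exact (mul_div_cancel_left₀ _ (mt hab.1 hn2β)).symm
  · filter_upwards [hpos] with n hn
    rw [Real.rpow_sub hn, Real.rpow_one, ← Real.rpow_add hn, two_mul]
end

section
/- Let A = {a_1 < a_2 < ...} and B = {b_1 < b_2 < ...} be two infinite subsets of ℕ. For n ∈ ℕ, define λ(n) to be the number of indices j ≥ 1 such that min{a_j, b_j} ≤ n ≤ max{a_j, b_j} − 1. Then λ(n) = |A(n) − B(n)| for every n ∈ ℕ. -/
open Filter Asymptotics

open Classical in
lemma countFn_eq_count (A : Set ℕ) (n : ℕ) :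
    countFn A n = Nat.count (· ∈ A) (n + 1) := by
  classical
  rw [Nat.count_eq_card_filter_range, countFn, ← Set.ncard_coe_finset]
  congr 1
  ext x
  simp [Nat.lt_succ_iff, And.comm]

open Classical in
lemma nth_le_iff (A : Set ℕ) (hA : A.Infinite) (n j : ℕ) :
    Nat.nth (· ∈ A) j ≤ n ↔ j < countFn A n := by
  classical
  rw [countFn_eq_count, Nat.lt_nth_iff_count_lt (p := (· ∈ A)) hA, Nat.lt_succ_iff]

theorem stmt10 (A B : Set ℕ) (hA : A.Infinite) (hB : B.Infinite) (n : ℕ) :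
    {j : ℕ | (min (Nat.nth (· ∈ A) j) (Nat.nth (· ∈ B) j) : ℤ) ≤ (n : ℤ) ∧
        (n : ℤ) ≤ (max (Nat.nth (· ∈ A) j) (Nat.nth (· ∈ B) j) : ℤ) - 1}.ncard
      = ((countFn A n : ℤ) - (countFn B n : ℤ)).natAbs := by
  set α := countFn A n with hα
  set β := countFn B n with hβ
  have hset : {j : ℕ | (min (Nat.nth (· ∈ A) j) (Nat.nth (· ∈ B) j) : ℤ) ≤ (n : ℤ) ∧
        (n : ℤ) ≤ (max (Nat.nth (· ∈ A) j) (Nat.nth (· ∈ B) j) : ℤ) - 1}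
      = Set.Ico (min α β) (max α β) := by
    ext j
    have ha := nth_le_iff A hA n j
    have hb := nth_le_iff B hB n j
    simp only [Set.mem_setOf_eq, Set.mem_Ico]
    push_cast
    omega
  rw [hset, ← Finset.coe_Ico, Set.ncard_coe_finset, Nat.card_Ico]
  omega
end
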